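/- arXiv:2404.05998 — 9 statements merged into one kernel-verified Lean document; each statement's English description precedes it below -/
import Mathlib

section
/- Let σ be a positive definite density matrix and define the GNS inner product ⟨X,Y⟩_{σ,1} = tr(σ X† Y) on N×N matrices. If a Lindbladian generator 𝓛 is self-adjoint with respect to ⟨·,·⟩_{σ,1}, then 𝓛 commutes with the modular operator Δ_σ(X) = σ X σ⁻¹. -/
open Matrix
open scoped ComplexOrder

lemma my_trace_zero {n : ℕ} (M : Matrix (Fin n) (Fin n) ℂ)
    (h : (Mᴴ * M).trace = 0) : M = 0 := by
  have h2 : ((∑ j, ∑ i, Complex.normSq (M i j) : ℝ) : ℂ) = 0 := by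
    push_cast
    simpa [Matrix.trace, Matrix.mul_apply, Matrix.conjTranspose_apply, Matrix.diag,
      Complex.normSq_eq_conj_mul_self] using h
  rw [Complex.ofReal_eq_zero] at h2
  ext i j
  have h3 := (Finset.sum_eq_zero_iff_of_nonneg
    (fun j _ => Finset.sum_nonneg fun i _ => Complex.normSq_nonneg _)).mp h2 j (Finset.mem_univ j)
  have h4 := (Finset.sum_eq_zero_iff_of_nonneg
    (fun i _ => Complex.normSq_nonneg _)).mp h3 i (Finset.mem_univ i)
  simpa [Complex.normSq_eq_zero] using h4

/-- If a Lindbladian (GKSL generator) is self-adjoint w.r.t. the GNS inner product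
`⟨X,Y⟩_{σ,1} = tr(σ Xᴴ Y)`, then it commutes with the modular operator
`Δ_σ(X) = σ X σ⁻¹`. -/
theorem stmt_1 {N : ℕ} (σ : Matrix (Fin N) (Fin N) ℂ)
    (hσ : σ.PosDef) (hσtr : σ.trace = 1)
    (𝓛 : Matrix (Fin N) (Fin N) ℂ → Matrix (Fin N) (Fin N) ℂ)
    (J : Type) [Fintype J]
    (G : Matrix (Fin N) (Fin N) ℂ) (hG : Gᴴ = G)
    (L : J → Matrix (Fin N) (Fin N) ℂ)
    (hGKSL : ∀ X, 𝓛 X = Complex.I • (G * X - X * G) +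
      ∑ j : J, ((L j)ᴴ * X * L j -
        (1 / 2 : ℂ) • ((L j)ᴴ * L j * X + X * ((L j)ᴴ * L j))))
    (hsa : ∀ X Y : Matrix (Fin N) (Fin N) ℂ,
      (σ * (𝓛 X)ᴴ * Y).trace = (σ * Xᴴ * 𝓛 Y).trace) :
    ∀ X : Matrix (Fin N) (Fin N) ℂ, 𝓛 (σ * X * σ⁻¹) = σ * 𝓛 X * σ⁻¹ := by
  have hσH : σᴴ = σ := hσ.isHermitian
  have hd : IsUnit σ.det := (Matrix.isUnit_iff_isUnit_det σ).mp hσ.isUnit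
  have hinv : σ * σ⁻¹ = 1 := mul_nonsing_inv σ hd
  have hinv' : σ⁻¹ * σ = 1 := nonsing_inv_mul σ hd
  -- star preservation
  have hstar : ∀ X, 𝓛 Xᴴ = (𝓛 X)ᴴ := by
    intro X
    rw [hGKSL, hGKSL]
    simp only [conjTranspose_add, conjTranspose_sum, conjTranspose_sub, conjTranspose_smul,
      conjTranspose_mul, conjTranspose_conjTranspose, hG, Complex.star_def, Complex.conj_I,
      mul_assoc]
    refine congrArg₂ (· + ·) ?_ (Finset.sum_congr rfl fun j _ => ?_)
    · rw [neg_smul, ← smul_neg, neg_sub]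
    · congr 1
      · congr 1
        · rw [map_div₀, _root_.map_one, map_ofNat]
        · rw [add_comm]
  -- left GNS self-adjointness
  have hB : ∀ X Y : Matrix (Fin N) (Fin N) ℂ,
      ((𝓛 X)ᴴ * σ * Y).trace = (Xᴴ * σ * 𝓛 Y).trace := by
    intro X Y
    have h := hsa Xᴴ Yᴴ
    rw [hstar X, conjTranspose_conjTranspose, hstar Y] at h
    have h2 := congrArg star h
    rw [← trace_conjTranspose, ← trace_conjTranspose] at h2
    simp only [conjTranspose_mul, conjTranspose_conjTranspose, hσH] at h2
    calc ((𝓛 X)ᴴ * σ * Y).trace = (Y * ((𝓛 X)ᴴ * σ)).trace := trace_mul_comm _ _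
      _ = (𝓛 Y * (Xᴴ * σ)).trace := h2
      _ = (Xᴴ * σ * 𝓛 Y).trace := trace_mul_comm _ _
  intro Y
  set M : Matrix (Fin N) (Fin N) ℂ := σ * 𝓛 Y - 𝓛 (σ * Y * σ⁻¹) * σ with hM
  have key : ∀ X : Matrix (Fin N) (Fin N) ℂ, (Xᴴ * M).trace = 0 := by
    intro X
    have e1 : (Xᴴ * (σ * 𝓛 Y)).trace = (Xᴴ * (𝓛 (σ * Y * σ⁻¹) * σ)).trace := by
      have c1 : (Xᴴ * (σ * 𝓛 Y)).trace = (Xᴴ * σ * 𝓛 Y).trace := by rw [mul_assoc]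
      have c2 : (Xᴴ * σ * 𝓛 Y).trace = ((𝓛 X)ᴴ * σ * Y).trace := (hB X Y).symm
      have c3 : ((𝓛 X)ᴴ * σ * Y).trace = ((𝓛 X)ᴴ * (σ * Y * σ⁻¹) * σ).trace := by
        rw [mul_assoc ((𝓛 X)ᴴ) (σ * Y * σ⁻¹) σ, mul_assoc (σ * Y) σ⁻¹ σ, hinv', mul_one,
          mul_assoc]
      have c4 : ((𝓛 X)ᴴ * (σ * Y * σ⁻¹) * σ).trace
          = (σ * (𝓛 X)ᴴ * (σ * Y * σ⁻¹)).trace := by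
        rw [trace_mul_cycle]
      have c5 := hsa X (σ * Y * σ⁻¹)
      have c6 : (σ * Xᴴ * 𝓛 (σ * Y * σ⁻¹)).trace
          = (Xᴴ * (𝓛 (σ * Y * σ⁻¹) * σ)).trace := by
        rw [trace_mul_cycle σ Xᴴ (𝓛 (σ * Y * σ⁻¹)), trace_mul_comm]
      rw [c1, c2, c3, c4, c5, c6]
    rw [hM, mul_sub, trace_sub, e1, sub_self]
  have hM0 : M = 0 := my_trace_zero M (key M)
  have : σ * 𝓛 Y = 𝓛 (σ * Y * σ⁻¹) * σ := by
    have := sub_eq_zero.mp hM0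
    exact this
  calc 𝓛 (σ * Y * σ⁻¹) = 𝓛 (σ * Y * σ⁻¹) * (σ * σ⁻¹) := by rw [hinv, mul_one]
    _ = (𝓛 (σ * Y * σ⁻¹) * σ) * σ⁻¹ := (mul_assoc _ _ _).symm
    _ = σ * 𝓛 Y * σ⁻¹ := by rw [← this]
end

section
/- Let σ be a positive definite matrix and V a self-adjoint matrix. Then the unique self-adjoint solution G of the Lyapunov equation G σ^{1/2} + σ^{1/2} G = i(σ^{1/2} V − V σ^{1/2}) is given by G = i·((Δ_σ^{1/2} − I)/(Δ_σ^{1/2} + I))(V), where Δ_σ(X) = σ X σ⁻¹ and the operator function is defined by functional calculus on the positive operator Δ_σ. -/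
open Matrix
open scoped ComplexOrder

private lemma lyap_inj {N : ℕ} {R : Matrix (Fin N) (Fin N) ℂ} (hR : R.PosDef)
    (G : Matrix (Fin N) (Fin N) ℂ) (h : G * R + R * G = 0) : G = 0 := by
  have hH : R.IsHermitian := hR.1
  set U : Matrix (Fin N) (Fin N) ℂ := (hH.eigenvectorUnitary : Matrix (Fin N) (Fin N) ℂ)
  have hUU : star U * U = 1 := (Matrix.mem_unitaryGroup_iff').mp hH.eigenvectorUnitary.2
  have hUU' : U * star U = 1 := (Matrix.mem_unitaryGroup_iff).mp hH.eigenvectorUnitary.2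
  set d : Fin N → ℂ := fun i => (hH.eigenvalues i : ℂ)
  have hspec : R = U * diagonal d * star U := hH.spectral_theorem
  set H : Matrix (Fin N) (Fin N) ℂ := star U * G * U with hHdef
  have e1 : star U * (G * R) * U = H * diagonal d := by
    rw [hspec, hHdef]
    rw [show star U * (G * (U * diagonal d * star U)) * U
          = star U * G * U * diagonal d * (star U * U) by simp only [mul_assoc]]
    rw [hUU, mul_one]
  have e2 : star U * (R * G) * U = diagonal d * H := by
    rw [hspec, hHdef]
    rw [show star U * (U * diagonal d * star U * G) * U
          = (star U * U) * (diagonal d * (star U * G * U)) by simp only [mul_assoc]]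
    rw [hUU, one_mul]
  have key : H * diagonal d + diagonal d * H = 0 := by
    rw [← e1, ← e2, ← Matrix.add_mul, ← Matrix.mul_add, h]
    simp
  have hHzero : H = 0 := by
    ext i j
    have h1 : H i j * d j + d i * H i j = 0 := by
      have := congr_fun (congr_fun key i) j
      simpa [Matrix.mul_apply, Matrix.diagonal_apply, Finset.sum_ite_eq, Finset.sum_ite_eq']
        using this
    have hd : d i + d j ≠ 0 := by
      have hi := hR.eigenvalues_pos i
      have hj := hR.eigenvalues_pos j
      simp only [d]
      intro hcon
      have h2 : hH.eigenvalues i + hH.eigenvalues j = 0 := by exact_mod_cast hcon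
      linarith
    have h3 : H i j * (d i + d j) = 0 := by linear_combination h1
    rcases mul_eq_zero.mp h3 with h' | h'
    · simpa using h'
    · exact absurd h' hd
  have hG : G = U * H * star U := by
    rw [hHdef]
    calc G = U * star U * G * (U * star U) := by rw [hUU']; simp
      _ = U * (star U * G * U) * star U := by simp only [mul_assoc]
  rw [hG, hHzero]; simp

/-- The Lyapunov equation `G σ^{1/2} + σ^{1/2} G = i(σ^{1/2} V − V σ^{1/2})` has a
unique solution `G`, which is characterized by
`(Δ_σ^{1/2} + I)(G) = i (Δ_σ^{1/2} − I)(V)`, i.e.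
`R G R⁻¹ + G = i (R V R⁻¹ − V)` with `R = σ^{1/2}`; this is the functional-calculus
formula `G = i ((Δ_σ^{1/2} − I)/(Δ_σ^{1/2} + I))(V)`. -/
theorem stmt_3 {N : ℕ} (σ R V : Matrix (Fin N) (Fin N) ℂ)
    (hσ : σ.PosDef) (hR : R.PosDef) (hR2 : R * R = σ) (hV : Vᴴ = V) :
    (∃! G : Matrix (Fin N) (Fin N) ℂ,
        G * R + R * G = Complex.I • (R * V - V * R)) ∧
      ∀ G : Matrix (Fin N) (Fin N) ℂ,
        G * R + R * G = Complex.I • (R * V - V * R) →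
          Gᴴ = G ∧ R * G * R⁻¹ + G = Complex.I • (R * V * R⁻¹ - V) := by
  set L : Matrix (Fin N) (Fin N) ℂ →ₗ[ℂ] Matrix (Fin N) (Fin N) ℂ :=
    { toFun := fun X => X * R + R * X
      map_add' := by intros x y; simp [Matrix.add_mul, Matrix.mul_add]; abel
      map_smul' := by intros c x; simp [Matrix.smul_mul, Matrix.mul_smul] } with hL
  have hLinj : Function.Injective L := by
    rw [← LinearMap.ker_eq_bot, LinearMap.ker_eq_bot']
    intro G hG
    exact lyap_inj hR G hG
  have hLsurj : Function.Surjective L := (LinearMap.injective_iff_surjective).mp hLinj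
  obtain ⟨G₀, hG₀⟩ := hLsurj (Complex.I • (R * V - V * R))
  have hRinv : R * R⁻¹ = 1 :=
    Matrix.mul_nonsing_inv R ((Matrix.isUnit_iff_isUnit_det R).mp hR.isUnit)
  constructor
  · exact ⟨G₀, hG₀, fun G' hG' => hLinj (hG'.trans hG₀.symm)⟩
  · intro G hG
    constructor
    · apply hLinj
      show Gᴴ * R + R * Gᴴ = G * R + R * G
      have hconj : (G * R + R * G)ᴴ = Complex.I • (R * V - V * R) := by
        rw [hG, Matrix.conjTranspose_smul, Matrix.conjTranspose_sub,
          Matrix.conjTranspose_mul, Matrix.conjTranspose_mul, hV, hR.1.eq]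
        simp [Complex.conj_I, smul_sub]; abel
      calc Gᴴ * R + R * Gᴴ = (R * G + G * R)ᴴ := by
            rw [Matrix.conjTranspose_add, Matrix.conjTranspose_mul, Matrix.conjTranspose_mul,
              hR.1.eq]
        _ = (G * R + R * G)ᴴ := by rw [add_comm]
        _ = G * R + R * G := by rw [hconj, hG]
    · calc R * G * R⁻¹ + G = (G * R + R * G) * R⁻¹ := by
            rw [Matrix.add_mul, mul_assoc G R R⁻¹, hRinv, mul_one, add_comm, mul_assoc]
        _ = Complex.I • (R * V * R⁻¹ - V) := by
            rw [hG, Matrix.smul_mul, Matrix.sub_mul, mul_assoc V R R⁻¹, hRinv, mul_one]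
end

section
/- Let H be self-adjoint with Gibbs state σ_β, let A be a self-adjoint matrix, and let q: ℝ → ℂ satisfy q(−ν) = conj(q(ν)). Define L = Σ_{ν∈B_H} q(ν) e^{−βν/4} A_ν. Then L satisfies the KMS condition Δ_{σ_β}^{−1/2}(L) = L†, i.e., σ_β^{−1/2} L σ_β^{1/2} = L†. -/
/-!
Everything is diagonal in the spectral decomposition `H = ∑ λᵢ Pᵢ`. By uniqueness of positive
square roots, `σ_β^{1/2} = κ ∑ e^{-βλᵢ/2} Pᵢ`, so conjugating the block `Pᵢ A Pⱼ` by `σ_β^{1/2}`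
multiplies it by `e^{β(λᵢ - λⱼ)/2}`: the weight `e^{-βν/4}` of the block in `L` becomes
`e^{βν/4}`. That is also its weight in `Lᴴ`, because `(Pⱼ A Pᵢ)ᴴ = Pᵢ A Pⱼ` and
`conj (q (-ν)) = q ν`.
-/

open Matrix
open scoped ComplexOrder

section SpectralFamily

variable {ι R A : Type*} [Fintype ι] [CommSemiring R] [Semiring A] [Algebra R A]
  {P : ι → A}

theorem star_sum_blocks [StarRing R] [StarRing A] [StarModule R A] (hPstar : ∀ i, star (P i) = P i)
    {X : A} (hX : star X = X) (g : ι × ι → R) :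
    star (∑ p : ι × ι, g p • (P p.1 * X * P p.2)) =
      ∑ p : ι × ι, star (g p.swap) • (P p.1 * X * P p.2) := by
  rw [star_sum, ← (Equiv.prodComm ι ι).sum_comp]
  refine Finset.sum_congr rfl fun p _ => ?_
  simp [star_smul, star_mul, hPstar, hX, mul_assoc]

section Orthogonal

variable [DecidableEq ι]

theorem sum_smul_mul_of_orthogonal (hPorth : ∀ i j, P i * P j = if i = j then P i else 0)
    (a : ι → R) (j : ι) : (∑ i, a i • P i) * P j = a j • P j := by
  simp [Finset.sum_mul, hPorth]

theorem mul_sum_smul_of_orthogonal (hPorth : ∀ i j, P i * P j = if i = j then P i else 0)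
    (a : ι → R) (i : ι) : P i * (∑ j, a j • P j) = a i • P i := by
  simp [Finset.mul_sum, hPorth]

theorem sum_smul_mul_sum_smul_of_orthogonal
    (hPorth : ∀ i j, P i * P j = if i = j then P i else 0) (a b : ι → R) :
    (∑ i, a i • P i) * (∑ i, b i • P i) = ∑ i, (a i * b i) • P i := by
  simp only [Finset.mul_sum, mul_smul_comm, sum_smul_mul_of_orthogonal hPorth, smul_smul, mul_comm]

theorem sum_smul_pow_of_orthogonal (hPorth : ∀ i j, P i * P j = if i = j then P i else 0)
    (hPsum : ∑ i, P i = 1) (a : ι → R) (k : ℕ) :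
    (∑ i, a i • P i) ^ k = ∑ i, (a i ^ k) • P i := by
  induction k with
  | zero => simp [hPsum]
  | succ k ih => simp only [pow_succ, ih, sum_smul_mul_sum_smul_of_orthogonal hPorth]

theorem sum_smul_mul_proj_mul_proj_mul_sum_smul
    (hPorth : ∀ i j, P i * P j = if i = j then P i else 0) (a b : ι → R) (X : A) (i j : ι) :
    (∑ k, a k • P k) * (P i * X * P j) * (∑ k, b k • P k) = (a i * b j) • (P i * X * P j) := by
  rw [mul_assoc, mul_assoc, mul_sum_smul_of_orthogonal hPorth, ← mul_assoc, ← mul_assoc,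
    sum_smul_mul_of_orthogonal hPorth, mul_smul_comm, smul_mul_assoc, smul_mul_assoc, smul_smul,
    mul_comm]

theorem sum_smul_mul_sum_blocks_mul_sum_smul
    (hPorth : ∀ i j, P i * P j = if i = j then P i else 0) (a b : ι → R) (g : ι × ι → R) (X : A) :
    (∑ k, a k • P k) * (∑ p : ι × ι, g p • (P p.1 * X * P p.2)) * (∑ k, b k • P k) =
      ∑ p : ι × ι, (a p.1 * g p * b p.2) • (P p.1 * X * P p.2) := by
  rw [Finset.mul_sum _ _ (∑ k, a k • P k), Finset.sum_mul]
  refine Fintype.sum_congr _ _ fun p => ?_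
  rw [mul_smul_comm, smul_mul_assoc, sum_smul_mul_proj_mul_proj_mul_sum_smul hPorth, smul_smul,
    mul_right_comm, mul_comm (g p)]

end Orthogonal

end SpectralFamily

section Exponential

variable {ι 𝕂 A : Type*} [Fintype ι] [DecidableEq ι] [RCLike 𝕂] [Ring A] [Algebra 𝕂 A]
  [TopologicalSpace A] [IsTopologicalRing A] [T2Space A] [ContinuousSMul 𝕂 A] {P : ι → A}

theorem exp_sum_smul_of_orthogonal (hPorth : ∀ i j, P i * P j = if i = j then P i else 0)
    (hPsum : ∑ i, P i = 1) (c : ι → 𝕂) :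
    NormedSpace.exp (∑ i, c i • P i) = ∑ i, NormedSpace.exp (c i) • P i := by
  have hsummable (i : ι) :
      Summable fun m : ℕ => ((m.factorial⁻¹ : 𝕂) * c i ^ m) • P i := by
    simpa [smul_eq_mul] using (NormedSpace.expSeries_summable' (𝕂 := 𝕂) (c i)).smul_const (P i)
  simp only [NormedSpace.exp_eq_tsum 𝕂, sum_smul_pow_of_orthogonal hPorth hPsum, Finset.smul_sum,
    smul_smul]
  rw [Summable.tsum_finsetSum fun i _ => hsummable i]
  refine Finset.sum_congr rfl fun i _ => ?_
  rw [Summable.tsum_smul_const]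
  · simp [smul_eq_mul]
  · simpa [smul_eq_mul] using NormedSpace.expSeries_summable' (𝕂 := 𝕂) (c i)

end Exponential

theorem Finset.sum_image_smul_sum_filter {α β R M : Type*} [Fintype α] [DecidableEq β]
    [Semiring R] [AddCommMonoid M] [Module R M] (g : α → β) (f : β → R) (m : α → M) :
    ∑ b ∈ Finset.univ.image g, f b • ∑ x ∈ Finset.univ.filter (fun x => g x = b), m x =
      ∑ x, f (g x) • m x := by
  rw [← Finset.sum_fiberwise_of_maps_to (g := g) (t := Finset.univ.image g)
    fun x _ => Finset.mem_image_of_mem g (Finset.mem_univ x)]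
  refine Finset.sum_congr rfl fun b _ => ?_
  rw [Finset.smul_sum]
  exact Finset.sum_congr rfl fun x hx => by rw [(Finset.mem_filter.mp hx).2]

namespace Matrix

theorem posSemidef_of_conjTranspose_eq_of_mul_self_eq {n R : Type*} [Fintype n] [CommRing R]
    [PartialOrder R] [StarRing R] [StarOrderedRing R] {M : Matrix n n R} (hM : Mᴴ = M)
    (hMM : M * M = M) : M.PosSemidef := by
  simpa [hM, hMM] using posSemidef_conjTranspose_mul_self M

variable {n ι : Type*} [Fintype n] [DecidableEq n] [Fintype ι] [DecidableEq ι]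

theorem inv_sum_smul_of_orthogonal {K : Type*} [Field K] {P : ι → Matrix n n K}
    (hPorth : ∀ i j, P i * P j = if i = j then P i else 0) (hPsum : ∑ i, P i = 1)
    {a : ι → K} (ha : ∀ i, a i ≠ 0) :
    (∑ i, a i • P i)⁻¹ = ∑ i, (a i)⁻¹ • P i := by
  refine inv_eq_right_inv ?_
  simp [sum_smul_mul_sum_smul_of_orthogonal hPorth, ha, hPsum]

variable {P : ι → Matrix n n ℂ}

theorem trace_sum_smul_pos_of_orthogonal [Nonempty n] (hPherm : ∀ i, (P i)ᴴ = P i)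
    (hPorth : ∀ i j, P i * P j = if i = j then P i else 0) (hPsum : ∑ i, P i = 1)
    {c : ι → ℂ} (hc : ∀ i, 0 < c i) : 0 < trace (∑ i, c i • P i) := by
  have htr_nonneg (i : ι) : 0 ≤ (P i).trace :=
    (posSemidef_of_conjTranspose_eq_of_mul_self_eq (hPherm i) (by simp [hPorth])).trace_nonneg
  obtain ⟨i, hi⟩ : ∃ i, 0 < (P i).trace := by
    by_contra! h
    have : ∑ i, (P i).trace = 0 :=
      Finset.sum_eq_zero fun i _ => ((htr_nonneg i).lt_or_eq.resolve_left (h i)).symm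
    rw [← trace_sum, hPsum, trace_one] at this
    simp at this
  rw [trace_sum]
  exact Finset.sum_pos' (fun j _ => by simpa using mul_nonneg (hc j).le (htr_nonneg j))
    ⟨i, Finset.mem_univ i, by simpa using mul_pos (hc i) hi⟩

open scoped MatrixOrder in
theorem eq_sum_smul_of_mul_self_eq (hPherm : ∀ i, (P i)ᴴ = P i)
    (hPorth : ∀ i j, P i * P j = if i = j then P i else 0) {R : Matrix n n ℂ} (hR : R.PosSemidef)
    {a : ι → ℝ} (ha : ∀ i, 0 ≤ a i) (hRR : R * R = ∑ i, ((a i ^ 2 : ℝ) : ℂ) • P i) :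
    R = ∑ i, (a i : ℂ) • P i := by
  have hS : (∑ i, (a i : ℂ) • P i).PosSemidef :=
    posSemidef_sum _ fun i _ =>
      (posSemidef_of_conjTranspose_eq_of_mul_self_eq (hPherm i) (by simp [hPorth])).smul
        (Complex.zero_le_real.mpr (ha i))
  refine (CFC.mul_self_eq_mul_self_iff R _ hR.nonneg hS.nonneg).mp ?_
  rw [hRR, sum_smul_mul_sum_smul_of_orthogonal hPorth]
  simp [sq]

theorem sqrt_gibbs_eq_sum_smul [Nonempty n] (hPherm : ∀ i, (P i)ᴴ = P i)
    (hPorth : ∀ i j, P i * P j = if i = j then P i else 0) (hPsum : ∑ i, P i = 1)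
    {lam : ι → ℝ} {H : Matrix n n ℂ} (hH : H = ∑ i, (lam i : ℂ) • P i) (β : ℝ)
    {R : Matrix n n ℂ} (hR : R.PosSemidef)
    (hRR : R * R = ((NormedSpace.exp (-(β : ℂ) • H)).trace)⁻¹ • NormedSpace.exp (-(β : ℂ) • H)) :
    ∃ κ : ℝ, 0 < κ ∧ R = ∑ i, ((κ * Real.exp (-β * lam i / 2) : ℝ) : ℂ) • P i := by
  have hexp : NormedSpace.exp (-(β : ℂ) • H) = ∑ i, ((Real.exp (-β * lam i) : ℝ) : ℂ) • P i := by
    simp only [hH, Finset.smul_sum, smul_smul, exp_sum_smul_of_orthogonal hPorth hPsum,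
      ← Complex.exp_eq_exp_ℂ]
    push_cast
    ring_nf
  obtain ⟨Z, hZ, htr⟩ : ∃ Z : ℝ, 0 < Z ∧ (NormedSpace.exp (-(β : ℂ) • H)).trace = Z := by
    have hpos := trace_sum_smul_pos_of_orthogonal hPherm hPorth hPsum
      fun i => Complex.zero_lt_real.mpr (Real.exp_pos (-β * lam i))
    rw [← hexp, Complex.pos_iff] at hpos
    exact ⟨_, hpos.1, Complex.ext rfl hpos.2.symm⟩
  refine ⟨(√Z)⁻¹, by positivity, eq_sum_smul_of_mul_self_eq hPherm hPorth hR
    (fun i => by positivity) ?_⟩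
  rw [hRR, htr, hexp, Finset.smul_sum]
  refine Fintype.sum_congr _ _ fun i => ?_
  rw [smul_smul, mul_pow, inv_pow, Real.sq_sqrt hZ.le, sq, ← Real.exp_add, add_halves]
  push_cast
  ring_nf

end Matrix

theorem stmt_7_general {N : ℕ} (ι : Type) [Fintype ι] [DecidableEq ι]
    (H : Matrix (Fin N) (Fin N) ℂ) (lam : ι → ℝ)
    (P : ι → Matrix (Fin N) (Fin N) ℂ)
    (hPherm : ∀ i, (P i)ᴴ = P i)
    (hPorth : ∀ i j, P i * P j = if i = j then P i else 0)
    (hPsum : ∑ i, P i = 1)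
    (hH : H = ∑ i, (lam i : ℂ) • P i)
    (β : ℝ)
    (σβ R : Matrix (Fin N) (Fin N) ℂ)
    (hσβ : σβ = ((NormedSpace.exp (-(β : ℂ) • H)).trace)⁻¹ •
      NormedSpace.exp (-(β : ℂ) • H))
    (hR : R.PosDef) (hR2 : R * R = σβ)
    (A : Matrix (Fin N) (Fin N) ℂ) (hA : Aᴴ = A)
    (q : ℝ → ℂ) (hq : ∀ ν : ℝ, q (-ν) = starRingEnd ℂ (q ν))
    (Aν : ℝ → Matrix (Fin N) (Fin N) ℂ)
    (hAν : ∀ ν : ℝ, Aν ν =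
      ∑ p ∈ Finset.univ.filter (fun p : ι × ι => lam p.1 - lam p.2 = ν),
        P p.1 * A * P p.2)
    (BH : Finset ℝ)
    (hBH : BH = Finset.univ.image (fun p : ι × ι => lam p.1 - lam p.2))
    (L : Matrix (Fin N) (Fin N) ℂ)
    (hL : L = ∑ ν ∈ BH, (q ν * Real.exp (-β * ν / 4)) • Aν ν) :
    R⁻¹ * L * R = Lᴴ := by
  cases isEmpty_or_nonempty (Fin N)
  · exact Subsingleton.elim _ _
  obtain ⟨κ, hκ, hRκ⟩ :=
    sqrt_gibbs_eq_sum_smul hPherm hPorth hPsum hH β hR.posSemidef (hR2.trans hσβ)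
  have hLblocks : L = ∑ p : ι × ι, (q (lam p.1 - lam p.2) *
      Real.exp (-β * (lam p.1 - lam p.2) / 4)) • (P p.1 * A * P p.2) := by
    simp only [hL, hBH, hAν]
    exact Finset.sum_image_smul_sum_filter _ (fun ν => q ν * Real.exp (-β * ν / 4)) _
  rw [hRκ, inv_sum_smul_of_orthogonal hPorth hPsum fun i => by positivity, hLblocks,
    sum_smul_mul_sum_blocks_mul_sum_smul hPorth, ← star_eq_conjTranspose,
    star_sum_blocks hPherm hA]
  refine Fintype.sum_congr _ _ fun p => congrArg (· • _) ?_
  obtain ⟨i, j⟩ := p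
  have hconj : star (q (lam j - lam i)) = q (lam i - lam j) := by
    rw [← neg_sub, hq, Complex.star_def, Complex.conj_conj]
  have hweight : (κ * Real.exp (-β * lam i / 2))⁻¹ * Real.exp (-β * (lam i - lam j) / 4) *
      (κ * Real.exp (-β * lam j / 2)) = Real.exp (-β * (lam j - lam i) / 4) := by
    calc _ = Real.exp (-β * (lam i - lam j) / 4 + -β * lam j / 2 - -β * lam i / 2) := by
          rw [Real.exp_sub, Real.exp_add]
          field_simp
      _ = _ := by ring_nf
  simp only [Prod.swap, star_mul', hconj, Complex.star_def, Complex.conj_ofReal, ← hweight]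
  push_cast
  ring

/-- For `L = Σ_{ν ∈ B_H} q(ν) e^{−βν/4} A_ν` with `A` self-adjoint and
`q(−ν) = conj(q(ν))`, the KMS condition `σ_β^{−1/2} L σ_β^{1/2} = Lᴴ` holds. -/
theorem stmt_7 {N : ℕ} (ι : Type) [Fintype ι] [DecidableEq ι]
    (H : Matrix (Fin N) (Fin N) ℂ) (lam : ι → ℝ)
    (P : ι → Matrix (Fin N) (Fin N) ℂ)
    (hHerm : Hᴴ = H)
    (hPherm : ∀ i, (P i)ᴴ = P i)
    (hPorth : ∀ i j, P i * P j = if i = j then P i else 0)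
    (hPsum : ∑ i, P i = 1)
    (hH : H = ∑ i, (lam i : ℂ) • P i)
    (β : ℝ) (hβ : 0 < β)
    (σβ R : Matrix (Fin N) (Fin N) ℂ)
    (hσβ : σβ = ((NormedSpace.exp (-(β : ℂ) • H)).trace)⁻¹ •
      NormedSpace.exp (-(β : ℂ) • H))
    (hR : R.PosDef) (hR2 : R * R = σβ)
    (A : Matrix (Fin N) (Fin N) ℂ) (hA : Aᴴ = A)
    (q : ℝ → ℂ) (hq : ∀ ν : ℝ, q (-ν) = starRingEnd ℂ (q ν))
    (Aν : ℝ → Matrix (Fin N) (Fin N) ℂ)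
    (hAν : ∀ ν : ℝ, Aν ν =
      ∑ p ∈ Finset.univ.filter (fun p : ι × ι => lam p.1 - lam p.2 = ν),
        P p.1 * A * P p.2)
    (BH : Finset ℝ)
    (hBH : BH = Finset.univ.image (fun p : ι × ι => lam p.1 - lam p.2))
    (L : Matrix (Fin N) (Fin N) ℂ)
    (hL : L = ∑ ν ∈ BH, (q ν * Real.exp (-β * ν / 4)) • Aν ν) :
    R⁻¹ * L * R = Lᴴ :=
  stmt_7_general ι H lam P hPherm hPorth hPsum hH β σβ R hσβ hR hR2 A hA q hq Aν hAν BH hBH L hL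
end

section
/- Let H be self-adjoint, β > 0, σ_β the Gibbs state, and L_j a matrix with σ_β L_j σ_β⁻¹ = e^{−ω} L_j for some real ω with L_j† ≠ L_j. Define L̃₁ = e^{−ω/4} L_j + e^{ω/4} L_j† and L̃₂ = i(−e^{−ω/4} L_j + e^{ω/4} L_j†). Then both L̃₁ and L̃₂ satisfy the KMS condition Δ_{σ_β}^{−1/2}(L̃) = L̃†, and for every matrix X one has L̃₁† X L̃₁ + L̃₂† X L̃₂ = 2 e^{−ω/2} L_j† X L_j + 2 e^{ω/2} L_j X L_j†. -/
/-!
Write `σ_β = R²` with `R` positive definite. In an eigenbasis of `R`, with eigenvalues `r_i > 0`,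
the relation `σ_β L = e^{-ω} L σ_β` says that `L i j ≠ 0` forces `r_i² = e^{-ω} r_j²`, hence
`r_i = e^{-ω/2} r_j`: the relation passes to the square root, `R L = e^{-ω/2} L R`.
So conjugation by `R` scales `L` by `e^{ω/2}` and (taking adjoints) `Lᴴ` by `e^{-ω/2}`, and the
weights `e^{∓ω/4}` are chosen so that this exchanges the two summands of `L̃₁` and of `L̃₂` with
those of their adjoints. In `L̃₁ᴴ X L̃₁ + L̃₂ᴴ X L̃₂` the cross terms cancel because `L̃₂` carries
the opposite relative sign and the phase `i` drops out against its conjugate.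
-/

open Matrix
open scoped ComplexOrder

namespace Matrix

section SquareRoot

variable {𝕜 : Type*} [RCLike 𝕜] {m n : Type*} [Fintype m] [Fintype n] [DecidableEq m]
  [DecidableEq n]

lemma diagonal_mul_eq_mul_diagonal_of_mul_self {a : n → ℝ} {b : m → ℝ} (ha : ∀ i, 0 ≤ a i)
    (hb : ∀ j, 0 ≤ b j) {M : Matrix n m 𝕜}
    (h : diagonal (fun i ↦ (a i : 𝕜)) * diagonal (fun i ↦ (a i : 𝕜)) * M =
      M * (diagonal (fun j ↦ (b j : 𝕜)) * diagonal (fun j ↦ (b j : 𝕜)))) :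
    diagonal (fun i ↦ (a i : 𝕜)) * M = M * diagonal (fun j ↦ (b j : 𝕜)) := by
  ext i j
  have hij := congrFun (congrFun h i) j
  simp only [diagonal_mul_diagonal, diagonal_mul, mul_diagonal] at hij ⊢
  rcases eq_or_ne (a i + b j) 0 with hsum | hsum
  · have hai : a i = 0 := by linarith [ha i, hb j]
    have hbj : b j = 0 := by linarith [ha i, hb j]
    simp [hai, hbj]
  · have hsum' : ((a i + b j : ℝ) : 𝕜) ≠ 0 := by exact_mod_cast hsum
    have hprod : ((a i + b j : ℝ) : 𝕜) * ((a i : 𝕜) * M i j - M i j * b j) = 0 := by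
      push_cast
      linear_combination hij
    linear_combination (mul_eq_zero.mp hprod).resolve_left hsum'

lemma IsHermitian.star_eigenvectorUnitary_mul_mul {A : Matrix n n 𝕜} (hA : A.IsHermitian) :
    star (hA.eigenvectorUnitary : Matrix n n 𝕜) * A * hA.eigenvectorUnitary =
      diagonal (fun i ↦ (hA.eigenvalues i : 𝕜)) := by
  have h := hA.conjStarAlgAut_star_eigenvectorUnitary
  simp only [Unitary.conjStarAlgAut_apply, Unitary.coe_star, star_star] at h
  exact h

lemma PosSemidef.mul_eq_mul_of_mul_self {A : Matrix n n 𝕜} {B : Matrix m m 𝕜} {X : Matrix n m 𝕜}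
    (hA : A.PosSemidef) (hB : B.PosSemidef) (h : A * A * X = X * (B * B)) :
    A * X = X * B := by
  set U : Matrix n n 𝕜 := ↑hA.1.eigenvectorUnitary
  set V : Matrix m m 𝕜 := ↑hB.1.eigenvectorUnitary
  have hU : star U * U = 1 := Unitary.coe_star_mul_self _
  have hU' : U * star U = 1 := Unitary.coe_mul_star_self _
  have hV' : V * star V = 1 := Unitary.coe_mul_star_self _
  set DA := star U * A * U
  set DB := star V * B * V
  have hDA : DA = diagonal (fun i ↦ (hA.1.eigenvalues i : 𝕜)) :=
    hA.1.star_eigenvectorUnitary_mul_mul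
  have hDB : DB = diagonal (fun j ↦ (hB.1.eigenvalues j : 𝕜)) :=
    hB.1.star_eigenvectorUnitary_mul_mul
  have hleft (Y : Matrix n m 𝕜) : star U * (A * Y) * V = DA * (star U * Y * V) := by
    simp only [DA, Matrix.mul_assoc]
    rw [← Matrix.mul_assoc U, hU', Matrix.one_mul]
  have hright (Y : Matrix n m 𝕜) : star U * (Y * B) * V = (star U * Y * V) * DB := by
    simp only [DB, Matrix.mul_assoc]
    rw [← Matrix.mul_assoc V, hV', Matrix.one_mul]
  have hinj (Y Z : Matrix n m 𝕜) (hYZ : star U * Y * V = star U * Z * V) : Y = Z := by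
    simpa only [Matrix.mul_assoc, hV', ← Matrix.mul_assoc U, hU', Matrix.one_mul,
      Matrix.mul_one] using congrArg (fun W ↦ U * W * star V) hYZ
  have hsq := congrArg (fun W ↦ star U * W * V) h
  rw [Matrix.mul_assoc A, hleft, hleft, ← Matrix.mul_assoc X, hright, hright,
    ← Matrix.mul_assoc, Matrix.mul_assoc _ DB, hDA, hDB] at hsq
  apply hinj
  rw [hleft, hright, hDA, hDB]
  exact diagonal_mul_eq_mul_diagonal_of_mul_self hA.eigenvalues_nonneg hB.eigenvalues_nonneg hsq

lemma PosSemidef.mul_eq_smul_mul_of_mul_self {R L : Matrix n n 𝕜} (hR : R.PosSemidef) {c : ℝ}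
    (hc : 0 ≤ c) (h : R * R * L = ((c ^ 2 : ℝ) : 𝕜) • (L * (R * R))) :
    R * L = (c : 𝕜) • (L * R) := by
  rw [← Matrix.mul_smul]
  refine hR.mul_eq_mul_of_mul_self (hR.smul (by exact_mod_cast hc)) ?_
  simp only [h, Matrix.smul_mul, Matrix.mul_smul, smul_smul, sq]
  norm_cast

end SquareRoot

section Conjugation

variable {K : Type*} [CommRing K] {n : Type*} [Fintype n] [DecidableEq n]

lemma mul_eq_smul_mul_of_mul_mul_inv_eq {σ L : Matrix n n K} {c : K} (hσ : IsUnit σ.det)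
    (h : σ * L * σ⁻¹ = c • L) : σ * L = c • (L * σ) := by
  rw [← Matrix.nonsing_inv_mul_cancel_right σ (σ * L) hσ, h, Matrix.smul_mul]

lemma inv_mul_mul_eq_smul_of_mul_eq {R L : Matrix n n K} {c d : K} (hR : IsUnit R.det)
    (hcd : d * c = 1) (h : R * L = c • (L * R)) : R⁻¹ * L * R = d • L := by
  have hLR : L * R = d • (R * L) := by rw [h, smul_smul, hcd, one_smul]
  rw [Matrix.mul_assoc, hLR, Matrix.mul_smul, Matrix.nonsing_inv_mul_cancel_left R _ hR]

end Conjugation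

section KMS

variable {n : Type*} [Fintype n] {R L : Matrix n n ℂ}

lemma smul_add_smul_conjTranspose_sandwich_add_I_smul_sandwich (a b : ℝ) (X : Matrix n n ℂ) :
    ((a : ℂ) • L + (b : ℂ) • Lᴴ)ᴴ * X * ((a : ℂ) • L + (b : ℂ) • Lᴴ) +
        (Complex.I • (-((a : ℂ) • L) + (b : ℂ) • Lᴴ))ᴴ * X *
          (Complex.I • (-((a : ℂ) • L) + (b : ℂ) • Lᴴ)) =
      (2 * (a : ℂ) ^ 2) • (Lᴴ * X * L) + (2 * (b : ℂ) ^ 2) • (L * X * Lᴴ) := by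
  simp only [Matrix.mul_add, Matrix.add_mul, Matrix.mul_smul, Matrix.smul_mul, Matrix.mul_neg,
    Matrix.neg_mul, smul_smul, conjTranspose_add, conjTranspose_neg, conjTranspose_smul,
    conjTranspose_conjTranspose, Complex.star_def, Complex.conj_ofReal, Complex.conj_I]
  match_scalars <;> ring_nf <;> simp only [Complex.I_sq] <;> ring

variable [DecidableEq n]

lemma inv_mul_conjTranspose_mul_eq_smul {c : ℝ} (hR : IsUnit R.det) (hRH : R.IsHermitian)
    (h : R * L = (c : ℂ) • (L * R)) : R⁻¹ * Lᴴ * R = (c : ℂ) • Lᴴ := by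
  have hLHR : Lᴴ * R = (c : ℂ) • (R * Lᴴ) := by
    simpa only [conjTranspose_mul, conjTranspose_smul, hRH.eq, Complex.star_def,
      Complex.conj_ofReal] using congrArg conjTranspose h
  rw [Matrix.mul_assoc, hLHR, Matrix.mul_smul, Matrix.nonsing_inv_mul_cancel_left R _ hR]

variable {a b : ℝ}

lemma kms_smul_add_smul_conjTranspose (hab : a * b = 1) (hL : R⁻¹ * L * R = (b : ℂ) ^ 2 • L)
    (hLH : R⁻¹ * Lᴴ * R = (a : ℂ) ^ 2 • Lᴴ) :
    R⁻¹ * ((a : ℂ) • L + (b : ℂ) • Lᴴ) * R = ((a : ℂ) • L + (b : ℂ) • Lᴴ)ᴴ := by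
  have hab' : (a : ℂ) * b = 1 := by exact_mod_cast hab
  simp only [Matrix.mul_add, Matrix.add_mul, Matrix.mul_smul, Matrix.smul_mul, hL, hLH, smul_smul,
    conjTranspose_add, conjTranspose_smul, conjTranspose_conjTranspose, Complex.star_def,
    Complex.conj_ofReal]
  rw [show (a : ℂ) * b ^ 2 = b by linear_combination b * hab',
    show (b : ℂ) * a ^ 2 = a by linear_combination a * hab', add_comm]

lemma kms_I_smul_neg_smul_add_smul_conjTranspose (hab : a * b = 1)
    (hL : R⁻¹ * L * R = (b : ℂ) ^ 2 • L) (hLH : R⁻¹ * Lᴴ * R = (a : ℂ) ^ 2 • Lᴴ) :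
    R⁻¹ * (Complex.I • (-((a : ℂ) • L) + (b : ℂ) • Lᴴ)) * R =
      (Complex.I • (-((a : ℂ) • L) + (b : ℂ) • Lᴴ))ᴴ := by
  have hab' : (a : ℂ) * b = 1 := by exact_mod_cast hab
  simp only [Matrix.mul_add, Matrix.add_mul, Matrix.mul_smul, Matrix.smul_mul, Matrix.mul_neg,
    Matrix.neg_mul, hL, hLH, smul_smul, conjTranspose_add, conjTranspose_neg, conjTranspose_smul,
    conjTranspose_conjTranspose, Complex.star_def, Complex.conj_ofReal, Complex.conj_I]
  rw [show (a : ℂ) * b ^ 2 = b by linear_combination b * hab',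
    show (b : ℂ) * a ^ 2 = a by linear_combination a * hab']
  module

end KMS

end Matrix

theorem stmt_8_general {N : ℕ}
    (σβ R : Matrix (Fin N) (Fin N) ℂ)
    (hR : R.PosDef) (hR2 : R * R = σβ)
    (L : Matrix (Fin N) (Fin N) ℂ) (ω : ℝ)
    (hmod : σβ * L * σβ⁻¹ = (Real.exp (-ω) : ℂ) • L)
    (L1 L2 : Matrix (Fin N) (Fin N) ℂ)
    (hL1 : L1 = (Real.exp (-ω / 4) : ℂ) • L + (Real.exp (ω / 4) : ℂ) • Lᴴ)
    (hL2 : L2 = Complex.I •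
      (-((Real.exp (-ω / 4) : ℂ) • L) + (Real.exp (ω / 4) : ℂ) • Lᴴ)) :
    R⁻¹ * L1 * R = L1ᴴ ∧ R⁻¹ * L2 * R = L2ᴴ ∧
      ∀ X : Matrix (Fin N) (Fin N) ℂ,
        L1ᴴ * X * L1 + L2ᴴ * X * L2 =
          (2 * Real.exp (-ω / 2) : ℂ) • (Lᴴ * X * L) +
            (2 * Real.exp (ω / 2) : ℂ) • (L * X * Lᴴ) := by
  subst hL1 hL2 hR2
  set a := Real.exp (-ω / 4)
  set b := Real.exp (ω / 4)
  have hab : a * b = 1 := by rw [← Real.exp_add, neg_div, neg_add_cancel, Real.exp_zero]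
  have ha_sq : Real.exp (-ω / 2) = a ^ 2 := by rw [← Real.exp_nat_mul]; ring_nf
  have hb_sq : Real.exp (ω / 2) = b ^ 2 := by rw [← Real.exp_nat_mul]; ring_nf
  have ha_four : Real.exp (-ω) = (a ^ 2) ^ 2 := by rw [← ha_sq, ← Real.exp_nat_mul]; ring_nf
  have hRdet : IsUnit R.det := (isUnit_iff_isUnit_det R).mp hR.isUnit
  have hσL : R * R * L = (Real.exp (-ω) : ℂ) • (L * (R * R)) :=
    mul_eq_smul_mul_of_mul_mul_inv_eq (by rw [det_mul]; exact hRdet.mul hRdet) hmod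
  have hRL : R * L = ((a ^ 2 : ℝ) : ℂ) • (L * R) :=
    hR.posSemidef.mul_eq_smul_mul_of_mul_self (c := a ^ 2) (by positivity)
      (by rw [hσL, ha_four]; rfl)
  have hL : R⁻¹ * L * R = (b : ℂ) ^ 2 • L := inv_mul_mul_eq_smul_of_mul_eq hRdet
    (by exact_mod_cast (show b ^ 2 * a ^ 2 = 1 by linear_combination (a * b + 1) * hab)) hRL
  have hLH : R⁻¹ * Lᴴ * R = (a : ℂ) ^ 2 • Lᴴ := by
    simpa using inv_mul_conjTranspose_mul_eq_smul hRdet hR.isHermitian hRL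
  refine ⟨kms_smul_add_smul_conjTranspose hab hL hLH,
    kms_I_smul_neg_smul_add_smul_conjTranspose hab hL hLH, fun X ↦ ?_⟩
  rw [ha_sq, hb_sq]
  push_cast
  exact smul_add_smul_conjTranspose_sandwich_add_I_smul_sandwich a b X

/-- If `σ_β L σ_β⁻¹ = e^{−ω} L`, then `L̃₁ = e^{−ω/4}L + e^{ω/4}Lᴴ` and
`L̃₂ = i(−e^{−ω/4}L + e^{ω/4}Lᴴ)` satisfy the KMS condition
`σ_β^{−1/2} L̃ σ_β^{1/2} = L̃ᴴ`, and for all `X`,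
`L̃₁ᴴ X L̃₁ + L̃₂ᴴ X L̃₂ = 2e^{−ω/2} Lᴴ X L + 2e^{ω/2} L X Lᴴ`. -/
theorem stmt_8 {N : ℕ} (β : ℝ) (hβ : 0 < β)
    (σβ R : Matrix (Fin N) (Fin N) ℂ)
    (hσβ : σβ.PosDef) (hR : R.PosDef) (hR2 : R * R = σβ)
    (L : Matrix (Fin N) (Fin N) ℂ) (ω : ℝ)
    (hmod : σβ * L * σβ⁻¹ = (Real.exp (-ω) : ℂ) • L)
    (hLnsa : Lᴴ ≠ L)
    (L1 L2 : Matrix (Fin N) (Fin N) ℂ)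
    (hL1 : L1 = (Real.exp (-ω / 4) : ℂ) • L + (Real.exp (ω / 4) : ℂ) • Lᴴ)
    (hL2 : L2 = Complex.I •
      (-((Real.exp (-ω / 4) : ℂ) • L) + (Real.exp (ω / 4) : ℂ) • Lᴴ)) :
    R⁻¹ * L1 * R = L1ᴴ ∧ R⁻¹ * L2 * R = L2ᴴ ∧
      ∀ X : Matrix (Fin N) (Fin N) ℂ,
        L1ᴴ * X * L1 + L2ᴴ * X * L2 =
          (2 * Real.exp (-ω / 2) : ℂ) • (Lᴴ * X * L) +
            (2 * Real.exp (ω / 2) : ℂ) • (L * X * Lᴴ) :=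
  stmt_8_general σβ R hR hR2 L ω hmod L1 L2 hL1 hL2
end

section
/- For every nonnegative integer k, the k-th derivative of the function x ↦ √(1+x²) on ℝ with k ≥ 1 satisfies |(√(1+x²))^{(k)}| ≤ (5/2)^k · k! for all x ∈ ℝ. -/
/-!
`√(1 + x²)` is the restriction of the principal branch `(1 + z²)^(1/2)`, which is holomorphic
off the rays `i y`, `|y| ≥ 1`; these lie at distance `d = √(1 + x²) ≥ 1` from a real point `x`.
On the circle of radius `2d/3` about `x` we have `|1 + z²| = |z - i| |z + i| ≤ (5d/3)²`, so
Cauchy's estimate gives `|f⁽ᵏ⁾(x)| ≤ k! (5d/3) / (2d/3)^k ≤ (5/2)^k k!` as soon as `k ≥ 1`.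
-/

open Complex Metric

noncomputable def csqrtOneAddSq (z : ℂ) : ℂ := (1 + z ^ 2) ^ (1 / 2 : ℂ)

lemma csqrtOneAddSq_ofReal (t : ℝ) : csqrtOneAddSq t = Real.sqrt (1 + t ^ 2) := by
  rw [Real.sqrt_eq_rpow, ofReal_cpow (by positivity), csqrtOneAddSq]
  push_cast
  rfl

lemma analyticAt_csqrtOneAddSq {z : ℂ} (hz : 1 + z ^ 2 ∈ slitPlane) :
    AnalyticAt ℂ csqrtOneAddSq z :=
  (analyticAt_const.add (analyticAt_id.pow 2)).cpow analyticAt_const hz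

/-- `1 + z²` leaves the slit plane only on the rays `z = i y`, `|y| ≥ 1`. -/
lemma one_add_sq_mem_slitPlane {x : ℝ} {z : ℂ} (hz : ‖z - x‖ ^ 2 < 1 + x ^ 2) :
    1 + z ^ 2 ∈ slitPlane := by
  have hnorm : ‖z - x‖ ^ 2 = (z.re - x) ^ 2 + z.im ^ 2 := by
    rw [Complex.sq_norm, normSq_apply]
    simp only [sub_re, ofReal_re, sub_im, ofReal_im, sub_zero]
    ring
  rw [mem_slitPlane_iff]
  by_contra! h
  obtain ⟨hre, him⟩ := h
  simp only [add_re, add_im, one_re, one_im, sq, mul_re, mul_im] at hre him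
  rcases mul_eq_zero.mp (by linarith : z.re * z.im = 0) with h0 | h0 <;>
    rw [h0] at hre hnorm <;> nlinarith

lemma norm_csqrtOneAddSq_le (z : ℂ) (x : ℝ) :
    ‖csqrtOneAddSq z‖ ≤ ‖z - x‖ + Real.sqrt (1 + x ^ 2) := by
  have hxI : ‖(x : ℂ) - I‖ = Real.sqrt (1 + x ^ 2) := by
    rw [norm_def, normSq_apply]
    simp only [sub_re, ofReal_re, I_re, sub_zero, sub_im, ofReal_im, I_im, zero_sub, mul_neg,
      mul_one, neg_neg]
    ring_nf
  have hxI' : ‖(x : ℂ) + I‖ = Real.sqrt (1 + x ^ 2) := by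
    rw [norm_def, normSq_apply]
    simp only [add_re, ofReal_re, I_re, add_zero, add_im, ofReal_im, I_im, zero_add, mul_one]
    ring_nf
  have hfactor : ‖1 + z ^ 2‖ ≤ (‖z - x‖ + Real.sqrt (1 + x ^ 2)) ^ 2 := by
    have : 1 + z ^ 2 = ((z - x) + (x - I)) * ((z - x) + (x + I)) := by
      ring_nf; rw [I_sq]; ring
    rw [this, norm_mul, sq]
    gcongr
    · exact (norm_add_le _ _).trans_eq (by rw [hxI])
    · exact (norm_add_le _ _).trans_eq (by rw [hxI'])
  calc ‖csqrtOneAddSq z‖ = Real.sqrt ‖1 + z ^ 2‖ := by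
        rw [csqrtOneAddSq, Real.sqrt_eq_rpow, ← norm_cpow_real]; push_cast; rfl
    _ ≤ ‖z - x‖ + Real.sqrt (1 + x ^ 2) := Real.sqrt_le_iff.mpr ⟨by positivity, hfactor⟩

lemma iteratedDeriv_eq_re_of_analyticAt {f : ℂ → ℂ} {g : ℝ → ℝ}
    (hf : ∀ t : ℝ, AnalyticAt ℂ f t) (hfg : ∀ t, g t = (f t).re) (n : ℕ) (t : ℝ) :
    iteratedDeriv n g t = (iteratedDeriv n f t).re := by
  induction n generalizing t with
  | zero => simpa using hfg t
  | succ n ih =>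
    have hanalytic : ∀ m, AnalyticAt ℂ (iteratedDeriv m f) t := by
      intro m
      induction m with
      | zero => simpa using hf t
      | succ m ihm => simpa [iteratedDeriv_succ] using ihm.deriv
    rw [iteratedDeriv_succ, iteratedDeriv_succ, funext ih]
    exact (hanalytic n).differentiableAt.hasDerivAt.real_of_complex.deriv

lemma five_thirds_div_two_thirds_pow_le {d : ℝ} (hd : 1 ≤ d) {k : ℕ} (hk : 1 ≤ k) :
    (2 * d / 3 + d) / (2 * d / 3) ^ k ≤ (5 / 2) ^ k := by
  obtain ⟨m, rfl⟩ := Nat.exists_eq_add_of_le' hk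
  have hinv : (2 * d / 3)⁻¹ ≤ 5 / 2 := by
    rw [inv_le_comm₀ (by positivity) (by norm_num)]; linarith
  calc (2 * d / 3 + d) / (2 * d / 3) ^ (m + 1) = 5 / 2 * (2 * d / 3)⁻¹ ^ m := by
        rw [inv_pow, pow_succ]; field_simp; ring
    _ ≤ 5 / 2 * (5 / 2) ^ m := by gcongr
    _ = (5 / 2) ^ (m + 1) := by ring

/-- For every `k ≥ 1`, the `k`-th derivative of `x ↦ √(1+x²)` satisfies
`|(√(1+x²))^{(k)}(x)| ≤ (5/2)^k k!` for all real `x`. -/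
theorem stmt_11 (k : ℕ) (hk : 1 ≤ k) (x : ℝ) :
    |iteratedDeriv k (fun x : ℝ => Real.sqrt (1 + x ^ 2)) x| ≤
      (5 / 2 : ℝ) ^ k * Nat.factorial k := by
  set d := Real.sqrt (1 + x ^ 2)
  have hd : 1 ≤ d := Real.one_le_sqrt.mpr (by nlinarith)
  have hsq : d ^ 2 = 1 + x ^ 2 := Real.sq_sqrt (by positivity)
  have hdiff : DifferentiableOn ℂ csqrtOneAddSq (closedBall (x : ℂ) (2 * d / 3)) :=
    fun z hz ↦ (analyticAt_csqrtOneAddSq (one_add_sq_mem_slitPlane (x := x) (by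
      rw [mem_closedBall, dist_eq] at hz; nlinarith [norm_nonneg (z - x)]))).differentiableWithinAt
  have hcauchy := norm_iteratedDeriv_le_of_forall_mem_sphere_norm_le k (by positivity)
    (hdiff.diffContOnCl_ball subset_rfl) fun z hz ↦
      (norm_csqrtOneAddSq_le z x).trans_eq (by rw [← dist_eq, mem_sphere.mp hz])
  rw [iteratedDeriv_eq_re_of_analyticAt (f := csqrtOneAddSq)
    (fun t ↦ analyticAt_csqrtOneAddSq (one_add_sq_mem_slitPlane (x := t) (by simp; positivity)))
    (fun t ↦ by simp [csqrtOneAddSq_ofReal])]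
  calc _ ≤ ‖iteratedDeriv k csqrtOneAddSq x‖ := abs_re_le_norm _
    _ ≤ Nat.factorial k * (2 * d / 3 + d) / (2 * d / 3) ^ k := hcauchy
    _ ≤ (5 / 2) ^ k * Nat.factorial k := by
      rw [mul_div_assoc, mul_comm]
      gcongr
      exact five_thirds_div_two_thirds_pow_le hd hk
end

section
/- For all positive reals a, s, t, one has inf over nonnegative integers m of (s/(ae))^{ms} · m^{ms} / t^m ≤ e^{es/2} · e^{−a t^{1/s}}. -/
/-!
With `r = a t^{1/s} / s` the `m`-th term equals `(m / (e r))^{ms}`. Taking `m = ⌊r⌋` makes the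
base at most `1/e`, so the term is at most `e^{-ms} ≤ e^{s - rs} ≤ e^{es/2 - rs}`.
-/

open Real

theorem rpow_le_exp_neg_of_le_exp_neg_one {b p : ℝ} (hb₀ : 0 ≤ b) (hb : b ≤ exp (-1))
    (hp : 0 ≤ p) : b ^ p ≤ exp (-p) :=
  calc b ^ p ≤ exp (-1) ^ p := rpow_le_rpow hb₀ hb hp
    _ = exp (-p) := by rw [← exp_mul, neg_one_mul]

theorem div_rpow_mul_natCast_rpow_div_pow {a s t : ℝ} (ha : 0 < a) (hs : 0 < s) (ht : 0 < t)
    (m : ℕ) :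
    (s / (a * exp 1)) ^ ((m : ℝ) * s) * (m : ℝ) ^ ((m : ℝ) * s) / t ^ m =
      ((m : ℝ) / (exp 1 * (a * t ^ (1 / s) / s))) ^ ((m : ℝ) * s) := by
  have ht_pow : t ^ m = (t ^ (1 / s)) ^ ((m : ℝ) * s) := by
    rw [← rpow_natCast, ← rpow_mul ht.le, one_div_mul_eq_div, mul_div_cancel_right₀ _ hs.ne']
  rw [ht_pow, ← mul_rpow (by positivity) m.cast_nonneg, ← div_rpow (by positivity) (by positivity)]
  congr 1
  field_simp

/-- For all positive reals `a, s, t`: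
`inf_{m ∈ ℕ} (s/(ae))^{ms} m^{ms} / t^m ≤ e^{es/2} e^{−a t^{1/s}}`. -/
theorem stmt_13 (a s t : ℝ) (ha : 0 < a) (hs : 0 < s) (ht : 0 < t) :
    (⨅ m : ℕ, (s / (a * Real.exp 1)) ^ ((m : ℝ) * s) *
        (m : ℝ) ^ ((m : ℝ) * s) / t ^ m) ≤
      Real.exp (Real.exp 1 * s / 2) * Real.exp (-a * t ^ (1 / s)) := by
  set r := a * t ^ (1 / s) / s with hr_def
  have hr : 0 < r := by positivity
  have hbdd : BddBelow (Set.range fun m : ℕ =>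
      (s / (a * exp 1)) ^ ((m : ℝ) * s) * (m : ℝ) ^ ((m : ℝ) * s) / t ^ m) :=
    ⟨0, by rintro _ ⟨m, rfl⟩; positivity⟩
  have hbase : (⌊r⌋₊ : ℝ) / (exp 1 * r) ≤ exp (-1) := by
    rw [div_le_iff₀ (by positivity), ← mul_assoc, ← exp_add, neg_add_cancel, exp_zero, one_mul]
    exact Nat.floor_le hr.le
  have he : 2 ≤ exp 1 := by linarith [add_one_le_exp (1 : ℝ)]
  refine (ciInf_le hbdd ⌊r⌋₊).trans ?_
  rw [div_rpow_mul_natCast_rpow_div_pow ha hs ht]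
  calc _ ≤ exp (-(⌊r⌋₊ * s)) :=
        rpow_le_exp_neg_of_le_exp_neg_one (by positivity) hbase (by positivity)
    _ ≤ exp (exp 1 * s / 2 - r * s) := by
        rw [exp_le_exp]
        nlinarith [Nat.lt_floor_add_one r]
    _ = _ := by
        rw [← exp_add, hr_def, div_mul_cancel₀ _ hs.ne']
        ring_nf
end

section
/- For every nonnegative integer N, the N-th derivative of tanh satisfies ‖tanh^{(N)}‖_{L^∞(ℝ)} ≤ 4^N · N!. In particular, for β > 0 the function ν ↦ tanh(−βν/4) belongs to the Gevrey class 𝒢¹_{1,β}(ℝ). -/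
/-! Since `tanh' = 1 - tanh²`, we have `tanh^{(n+1)} = 1^{(n)} - (tanh · tanh)^{(n)}`. Bounding the
second term by the Leibniz rule and the induction hypothesis gives
`|tanh^{(n+1)}| ≤ 1 + (n + 1) 4ⁿ n! ≤ 4ⁿ⁺¹ (n + 1)!`. Rescaling the variable by `c` multiplies the
`k`-th derivative by `cᵏ`, and `c = -β/4` turns `4ᵏ` into `βᵏ`. -/

open Nat
open scoped ContDiff

section

variable {𝕜 : Type*} [NontriviallyNormedField 𝕜] {A : Type*} [NormedRing A] [NormedAlgebra 𝕜 A]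

theorem norm_iteratedDeriv_mul_le_of_le {f g : 𝕜 → A} {n : ℕ} (hf : ContDiff 𝕜 n f)
    (hg : ContDiff 𝕜 n g) (x : 𝕜) {a b C : ℝ}
    (hfb : ∀ i ≤ n, ‖iteratedDeriv i f x‖ ≤ a * C ^ i * i !)
    (hgb : ∀ i ≤ n, ‖iteratedDeriv i g x‖ ≤ b * C ^ i * i !) :
    ‖iteratedDeriv n (fun y => f y * g y) x‖ ≤ a * b * (n + 1) * C ^ n * n ! := by
  have hterm : ∀ i ∈ Finset.range (n + 1), (n.choose i : ℝ) * ‖iteratedDeriv i f x‖ *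
      ‖iteratedDeriv (n - i) g x‖ ≤ a * b * C ^ n * n ! := by
    intro i hi
    have hin : i ≤ n := Nat.lt_succ_iff.mp (Finset.mem_range.mp hi)
    calc (n.choose i : ℝ) * ‖iteratedDeriv i f x‖ * ‖iteratedDeriv (n - i) g x‖
        ≤ n.choose i * (a * C ^ i * i !) * (b * C ^ (n - i) * (n - i)!) := by
          gcongr
          · exact mul_nonneg (Nat.cast_nonneg _) ((norm_nonneg _).trans (hfb i hin))
          · exact hfb i hin
          · exact hgb (n - i) (Nat.sub_le n i)
      _ = a * b * (C ^ i * C ^ (n - i)) * ((n.choose i * i ! * (n - i)! : ℕ) : ℝ) := by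
          push_cast; ring
      _ = a * b * C ^ n * n ! := by
          rw [← pow_add, Nat.add_sub_cancel' hin, Nat.choose_mul_factorial_mul_factorial hin]
  calc ‖iteratedDeriv n (fun y => f y * g y) x‖
      ≤ ∑ i ∈ Finset.range (n + 1),
          (n.choose i : ℝ) * ‖iteratedDeriv i f x‖ * ‖iteratedDeriv (n - i) g x‖ := by
        simpa only [norm_iteratedFDeriv_eq_norm_iteratedDeriv] using
          norm_iteratedFDeriv_mul_le hf hg x le_rfl
    _ ≤ ∑ _i ∈ Finset.range (n + 1), a * b * C ^ n * n ! := Finset.sum_le_sum hterm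
    _ = a * b * (n + 1) * C ^ n * n ! := by
        rw [Finset.sum_const, Finset.card_range, nsmul_eq_mul]; push_cast; ring

theorem norm_iteratedDeriv_comp_const_mul_le {f : 𝕜 → 𝕜} {k : ℕ} (hf : ContDiff 𝕜 k f)
    (c : 𝕜) {M : ℝ} (hM : ∀ y, ‖iteratedDeriv k f y‖ ≤ M) (x : 𝕜) :
    ‖iteratedDeriv k (fun y => f (c * y)) x‖ ≤ ‖c‖ ^ k * M := by
  rw [iteratedDeriv_comp_const_mul hf, norm_mul, norm_pow]
  exact mul_le_mul_of_nonneg_left (hM _) (by positivity)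

end

theorem abs_iteratedDeriv_le_of_deriv_eq_one_sub_sq {f : ℝ → ℝ} (hf : ContDiff ℝ ∞ f)
    (hderiv : deriv f = fun x => 1 - f x ^ 2) (hbound : ∀ x, |f x| ≤ 1) (n : ℕ) (x : ℝ) :
    |iteratedDeriv n f x| ≤ 4 ^ n * n ! := by
  induction n using Nat.strong_induction_on with
  | _ n ih =>
  rcases n with _ | m
  · simpa using hbound x
  have hfm : ContDiff ℝ m f := contDiff_infty.1 hf m
  have hsq : ‖iteratedDeriv m (fun y => f y * f y) x‖ ≤ 1 * 1 * (m + 1) * 4 ^ m * m ! :=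
    norm_iteratedDeriv_mul_le_of_le hfm hfm x
      (fun i hi => by simpa using ih i (by omega)) (fun i hi => by simpa using ih i (by omega))
  have hconst : |iteratedDeriv m (fun _ : ℝ => (1 : ℝ)) x| ≤ 1 := by
    rw [iteratedDeriv_const]; split_ifs <;> norm_num
  have hone : (1 : ℝ) ≤ (m + 1) * 4 ^ m * m ! := by
    have h4 : (1 : ℝ) ≤ 4 ^ m * m ! := one_le_mul_of_one_le_of_one_le
      (one_le_pow₀ (by norm_num)) (by exact_mod_cast m.factorial_pos)
    nlinarith [(m.cast_nonneg : (0 : ℝ) ≤ m)]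
  have hsplit : iteratedDeriv (m + 1) f x =
      iteratedDeriv m (fun _ => (1 : ℝ)) x - iteratedDeriv m (fun y => f y * f y) x := by
    rw [iteratedDeriv_succ', hderiv, ← iteratedDeriv_fun_sub contDiffAt_const
      (hfm.mul hfm).contDiffAt]
    simp only [sq]
  rw [hsplit]
  calc _ ≤ |iteratedDeriv m (fun _ : ℝ => (1 : ℝ)) x| + |iteratedDeriv m (fun y => f y * f y) x| :=
        abs_sub _ _
    _ ≤ 1 + (m + 1) * 4 ^ m * m ! := by
        rw [Real.norm_eq_abs] at hsq; linarith
    _ ≤ 4 ^ (m + 1) * (m + 1)! := by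
        rw [pow_succ, Nat.factorial_succ]; push_cast; linarith

namespace Real

theorem tanh_eq_sinh_div_cosh' : tanh = sinh / cosh :=
  funext tanh_eq_sinh_div_cosh

theorem hasDerivAt_tanh (x : ℝ) : HasDerivAt tanh (1 - tanh x ^ 2) x := by
  have h := (hasDerivAt_sinh x).div (hasDerivAt_cosh x) (cosh_pos x).ne'
  rw [← tanh_eq_sinh_div_cosh'] at h
  refine h.congr_deriv ?_
  rw [tanh_eq_sinh_div_cosh]
  field_simp

theorem contDiff_tanh {n : WithTop ℕ∞} : ContDiff ℝ n tanh := by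
  rw [tanh_eq_sinh_div_cosh']
  exact contDiff_sinh.div contDiff_cosh fun x => (cosh_pos x).ne'

theorem deriv_tanh : deriv tanh = fun x => 1 - tanh x ^ 2 :=
  funext fun x => (hasDerivAt_tanh x).deriv

theorem abs_iteratedDeriv_tanh_le (n : ℕ) (x : ℝ) : |iteratedDeriv n tanh x| ≤ 4 ^ n * n ! :=
  abs_iteratedDeriv_le_of_deriv_eq_one_sub_sq contDiff_tanh deriv_tanh
    (fun x => (abs_tanh_lt_one x).le) n x

end Real

/-- `‖tanh^{(N)}‖_∞ ≤ 4^N N!`; consequently, for `β > 0` the function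
`ν ↦ tanh(−βν/4)` lies in the Gevrey class `𝒢¹_{1,β}(ℝ)`. -/
theorem stmt_15 :
    (∀ (n : ℕ) (x : ℝ),
      |iteratedDeriv n Real.tanh x| ≤ (4 : ℝ) ^ n * Nat.factorial n) ∧
    ∀ (β : ℝ), 0 < β → ∀ (k : ℕ) (x : ℝ),
      |iteratedDeriv k (fun ν : ℝ => Real.tanh (-β * ν / 4)) x| ≤
        1 * β ^ k * Nat.factorial k := by
  refine ⟨Real.abs_iteratedDeriv_tanh_le, fun β hβ k x => ?_⟩
  have hscale : (fun ν : ℝ => Real.tanh (-β * ν / 4)) = fun ν => Real.tanh (-(β / 4) * ν) := by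
    ext ν; ring_nf
  have h := norm_iteratedDeriv_comp_const_mul_le Real.contDiff_tanh (-(β / 4))
    (Real.abs_iteratedDeriv_tanh_le k) x
  rw [hscale, ← Real.norm_eq_abs]
  calc _ ≤ ‖-(β / 4)‖ ^ k * (4 ^ k * k !) := h
    _ = 1 * β ^ k * k ! := by
        rw [norm_neg, Real.norm_of_nonneg (by positivity), div_pow]
        field_simp
end

section
/- Let h ∈ L¹(ℝ) be continuous with inverse Fourier transform ĥ(y) = ∫ h(x) e^{ixy} dx, and suppose ĥ is compactly supported in [−S, S] and Σ_{m∈ℤ} |h(mτ)| < ∞. Let H be a self-adjoint matrix with ‖H‖ bounded so that all Bohr frequencies lie in [−2‖H‖, 2‖H‖], and let 0 < τ < 2π/(2‖H‖+S). Then for every matrix A, ∫_{−∞}^{∞} h(t) e^{iHt} A e^{−iHt} dt = Σ_{m∈ℤ} τ h(mτ) e^{iHmτ} A e^{−iHmτ}. -/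
/-!
Write `H = ∑ λ_a P_a`. The map `c ↦ ∑ c_a P_a` is a continuous algebra homomorphism out of
`ι → ℂ`, so it commutes with `exp`, and `e^{iHt} A e^{-iHt} = ∑_{a,b} e^{it(λ_a - λ_b)} P_a A P_b`.
Both sides thus reduce to a single Bohr frequency `y = λ_a - λ_b`, i.e. to the sampling identity
`∫ f = τ ∑_m f(mτ)` for `f t = h t e^{ity}`. As `𝓕 f ξ = ĥ(y - 2πξ)` vanishes for `|ξ| ≥ 1/τ`,
Poisson summation for the compactly supported `x ↦ 𝓕 f (x / τ)` has the single term
`𝓕 f 0 = ∫ f` on one side and, by Fourier inversion, the samples `τ f(-mτ)` on the other.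
-/

open Matrix MeasureTheory Complex
open scoped Real ComplexOrder FourierTransform

section Exponential

variable {ι 𝕂 𝔸 : Type*} [Fintype ι] [RCLike 𝕂] [NormedRing 𝔸] [NormedAlgebra 𝕂 𝔸]
  {P : ι → 𝔸}

noncomputable def CompleteOrthogonalIdempotents.linearCombinationAlgHom
    (hP : CompleteOrthogonalIdempotents P) : (ι → 𝕂) →ₐ[𝕂] 𝔸 :=
  AlgHom.ofLinearMap (Fintype.linearCombination 𝕂 P)
    (by simp [Fintype.linearCombination_apply, hP.complete])
    (fun a b => by
      classical
      simp only [Fintype.linearCombination_apply, Pi.mul_apply, Finset.sum_mul_sum,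
        smul_mul_smul_comm, hP.mul_eq, smul_ite, smul_zero, Finset.sum_ite_eq,
        Finset.mem_univ, if_true])

theorem CompleteOrthogonalIdempotents.linearCombinationAlgHom_apply
    (hP : CompleteOrthogonalIdempotents P) (c : ι → 𝕂) :
    hP.linearCombinationAlgHom c = ∑ i, c i • P i :=
  Fintype.linearCombination_apply 𝕂 P c

theorem CompleteOrthogonalIdempotents.exp_sum_smul (hP : CompleteOrthogonalIdempotents P)
    (c : ι → 𝕂) : NormedSpace.exp (∑ i, c i • P i) = ∑ i, NormedSpace.exp (c i) • P i := by
  let : NormedAlgebra ℚ 𝔸 := NormedAlgebra.restrictScalars ℚ 𝕂 𝔸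
  have hcont : Continuous (hP.linearCombinationAlgHom (𝕂 := 𝕂)) :=
    LinearMap.continuous_of_finiteDimensional (hP.linearCombinationAlgHom (𝕂 := 𝕂)).toLinearMap
  rw [← hP.linearCombinationAlgHom_apply, ← NormedSpace.map_exp _ hcont,
    hP.linearCombinationAlgHom_apply]
  simp only [Pi.coe_exp]

theorem CompleteOrthogonalIdempotents.exp_smul_mul_mul_exp_neg_smul
    (hP : CompleteOrthogonalIdempotents P) (lam : ι → 𝕂) (z : 𝕂) (A : 𝔸) :
    NormedSpace.exp (z • ∑ i, lam i • P i) * A * NormedSpace.exp (-z • ∑ i, lam i • P i) =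
      ∑ a, ∑ b, NormedSpace.exp (z * (lam a - lam b)) • (P a * A * P b) := by
  simp only [Finset.smul_sum, smul_smul, hP.exp_sum_smul, Finset.sum_mul, Finset.mul_sum,
    smul_mul_assoc, mul_smul_comm, ← NormedSpace.exp_add]
  rw [Finset.sum_comm]
  congr! 4 with a - b -
  ring

end Exponential

theorem CompleteOrthogonalIdempotents.matrix_exp_smul_mul_mul_exp_neg_smul_apply
    {n ι : Type*} [Fintype n] [DecidableEq n] [Fintype ι] {P : ι → Matrix n n ℂ}
    (hP : CompleteOrthogonalIdempotents P) (lam : ι → ℝ) (t : ℝ) (A : Matrix n n ℂ) (i j : n) :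
    (NormedSpace.exp ((I * t) • ∑ a, (lam a : ℂ) • P a) * A *
      NormedSpace.exp (-(I * t) • ∑ a, (lam a : ℂ) • P a)) i j =
        ∑ a, ∑ b, cexp (I * t * (lam a - lam b : ℝ)) * (P a * A * P b) i j := by
  have hexp : NormedSpace.exp ((I * t) • ∑ a, (lam a : ℂ) • P a) * A *
      NormedSpace.exp (-(I * t) • ∑ a, (lam a : ℂ) • P a) =
        ∑ a, ∑ b, NormedSpace.exp (I * t * (lam a - lam b)) • (P a * A * P b) := by
    -- `exp` only depends on the topology, so any algebra norm on matrices will do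
    let : NormedRing (Matrix n n ℂ) := Matrix.linftyOpNormedRing
    let : NormedAlgebra ℂ (Matrix n n ℂ) := Matrix.linftyOpNormedAlgebra
    exact hP.exp_smul_mul_mul_exp_neg_smul _ _ _
  rw [hexp]
  simp only [Matrix.sum_apply, Matrix.smul_apply, smul_eq_mul, ← Complex.exp_eq_exp_ℂ, ofReal_sub]

theorem Continuous.fourier_fourier_eq_neg {V E : Type*} [NormedAddCommGroup V]
    [InnerProductSpace ℝ V] [FiniteDimensional ℝ V] [MeasurableSpace V] [BorelSpace V]
    [NormedAddCommGroup E] [NormedSpace ℂ E] [CompleteSpace E] {f : V → E} (hc : Continuous f)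
    (hf : Integrable f) (hFf : Integrable (𝓕 f)) (v : V) : 𝓕 (𝓕 f) v = f (-v) := by
  conv_rhs => rw [← hc.fourierInv_fourier_eq hf hFf, Real.fourierInv_eq_fourier_neg, neg_neg]

namespace Real

theorem fourier_apply_zero {E : Type*} [NormedAddCommGroup E] [NormedSpace ℂ E] (f : ℝ → E) :
    𝓕 f 0 = ∫ x, f x := by
  simp [fourier_real_eq_integral_exp_smul]

theorem fourier_comp_div {E : Type*} [NormedAddCommGroup E] [NormedSpace ℂ E] (f : ℝ → E)
    {τ : ℝ} (hτ : τ ≠ 0) (w : ℝ) : 𝓕 (fun x => f (x / τ)) w = |τ| • 𝓕 f (τ * w) := by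
  simp only [fourier_real_eq_integral_exp_smul]
  rw [← Measure.integral_comp_div _ τ]
  congr! 5 with x
  field_simp

theorem tsum_eq_tsum_fourier_of_hasCompactSupport {f : ℝ → ℂ} (hc : Continuous f)
    (hf : HasCompactSupport f) (hFf : Summable fun n : ℤ => 𝓕 f n) (x : ℝ) :
    ∑' n : ℤ, f (x + n) = ∑' n : ℤ, 𝓕 f n * fourier n (x : UnitAddCircle) := by
  refine tsum_eq_tsum_fourier_of_rpow_decay_of_summable hc one_lt_two ?_ hFf x
  rw [hasCompactSupport_iff_eventuallyEq, Filter.coclosedCompact_eq_cocompact] at hf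
  exact hf.trans_isBigO (Asymptotics.isBigO_zero _ _)

theorem eq_tsum_fourier_of_eq_zero_of_one_le_abs {G : ℝ → ℂ} (hc : Continuous G)
    (hG : ∀ x, 1 ≤ |x| → G x = 0) (hFG : Summable fun n : ℤ => 𝓕 G n) :
    G 0 = ∑' n : ℤ, 𝓕 G n := by
  have hsupp : HasCompactSupport G := by
    refine HasCompactSupport.intro (isCompact_closedBall 0 1) fun x hx => hG x ?_
    rw [Metric.mem_closedBall, dist_zero_right, norm_eq_abs, not_le] at hx
    exact hx.le
  have poisson := tsum_eq_tsum_fourier_of_hasCompactSupport hc hsupp hFG 0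
  simp only [zero_add, QuotientAddGroup.mk_zero, fourier_eval_zero, mul_one] at poisson
  rw [← poisson, tsum_eq_single (f := fun n : ℤ => G n) 0 fun n hn => hG n ?_, Int.cast_zero]
  exact_mod_cast Int.one_le_abs hn

theorem hasSum_sample_of_fourier_eq_zero {f : ℝ → ℂ} (hc : Continuous f) (hf : Integrable f)
    {τ : ℝ} (hτ : 0 < τ) (hFf : ∀ ξ, 1 ≤ τ * |ξ| → 𝓕 f ξ = 0)
    (hsum : Summable fun m : ℤ => f (m * τ)) :
    HasSum (fun m : ℤ => τ * f (m * τ)) (∫ x, f x) := by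
  have hF_cont : Continuous (𝓕 f) :=
    VectorFourier.fourierIntegral_continuous continuous_fourierChar continuous_inner hf
  have hF_supp : HasCompactSupport (𝓕 f) := by
    refine HasCompactSupport.intro (isCompact_closedBall 0 τ⁻¹) fun ξ hξ => hFf ξ ?_
    rw [Metric.mem_closedBall, dist_zero_right, norm_eq_abs, not_le,
      inv_lt_iff_one_lt_mul₀' hτ] at hξ
    exact hξ.le
  have hFG : ∀ n : ℤ, 𝓕 (fun x => 𝓕 f (x / τ)) n = τ * f ((-n : ℤ) * τ) := fun n => by
    rw [fourier_comp_div _ hτ.ne', abs_of_pos hτ,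
      hc.fourier_fourier_eq_neg hf (hF_cont.integrable_of_hasCompactSupport hF_supp),
      Complex.real_smul, Int.cast_neg, neg_mul, mul_comm τ]
  have hFG_sum : Summable fun n : ℤ => 𝓕 (fun x => 𝓕 f (x / τ)) n :=
    ((hsum.comp_injective neg_injective).mul_left (τ : ℂ)).congr fun n => (hFG n).symm
  have poisson := eq_tsum_fourier_of_eq_zero_of_one_le_abs (G := fun x => 𝓕 f (x / τ))
    (hF_cont.comp (continuous_id.div_const τ))
    (fun x hx => hFf _ (by rwa [abs_div, abs_of_pos hτ, mul_div_cancel₀ _ hτ.ne'])) hFG_sum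
  simp only [zero_div, fourier_apply_zero, hFG] at poisson
  rw [poisson, ← (Equiv.neg ℤ).hasSum_iff]
  exact (hFG_sum.congr hFG).hasSum

theorem fourier_mul_cexp (h : ℝ → ℂ) (y ξ : ℝ) :
    𝓕 (fun t => h t * cexp (I * t * y)) ξ = ∫ t, h t * cexp (I * t * (y - 2 * π * ξ : ℝ)) := by
  rw [fourier_real_eq_integral_exp_smul]
  congr 1 with t
  rw [smul_eq_mul, mul_left_comm, ← Complex.exp_add]
  congr 2
  push_cast
  ring

end Real

theorem norm_cexp_I_mul_ofReal_mul (t y : ℝ) : ‖cexp (I * t * y)‖ = 1 := by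
  rw [mul_assoc, ← ofReal_mul]
  exact norm_exp_I_mul_ofReal _

theorem MeasureTheory.Integrable.mul_cexp_I_mul_ofReal_mul {h : ℝ → ℂ} (hh : Integrable h)
    (y : ℝ) : Integrable fun t : ℝ => h t * cexp (I * t * y) :=
  hh.mul_bdd (by fun_prop) (ae_of_all _ fun t => (norm_cexp_I_mul_ofReal_mul t y).le)

theorem hasSum_sample_mul_cexp {h : ℝ → ℂ} (hc : Continuous h) (hh : Integrable h) {S τ y : ℝ}
    (hsupp : ∀ v : ℝ, S < |v| → ∫ t, h t * cexp (I * t * v) = 0) (hτ : 0 < τ)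
    (hτy : τ * (|y| + S) < 2 * π) (hsum : Summable fun m : ℤ => ‖h (m * τ)‖) :
    HasSum (fun m : ℤ => τ * h (m * τ) * cexp (I * (m * τ : ℝ) * y))
      (∫ t, h t * cexp (I * t * y)) := by
  have hF : ∀ ξ, 1 ≤ τ * |ξ| → 𝓕 (fun t => h t * cexp (I * t * y)) ξ = 0 := by
    intro ξ hξ
    rw [Real.fourier_mul_cexp]
    apply hsupp
    have hξ' : |y| + S < 2 * π * |ξ| := lt_of_mul_lt_mul_left
      (by nlinarith [mul_le_mul_of_nonneg_left hξ Real.two_pi_pos.le]) hτ.le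
    have := abs_sub_abs_le_abs_sub (2 * π * ξ) y
    rw [abs_mul, abs_of_pos Real.two_pi_pos, abs_sub_comm] at this
    linarith
  have hsum' : Summable fun m : ℤ => h (m * τ) * cexp (I * (m * τ : ℝ) * y) :=
    Summable.of_norm (hsum.congr fun m => by rw [norm_mul, norm_cexp_I_mul_ofReal_mul, mul_one])
  simpa only [mul_assoc] using Real.hasSum_sample_of_fourier_eq_zero (by fun_prop)
    (hh.mul_cexp_I_mul_ofReal_mul y) hτ hF hsum'

theorem stmt_16_general {N : ℕ} (ι : Type) [Fintype ι] [DecidableEq ι]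
    (H : Matrix (Fin N) (Fin N) ℂ) (lam : ι → ℝ)
    (P : ι → Matrix (Fin N) (Fin N) ℂ)
    (hPorth : ∀ i j, P i * P j = if i = j then P i else 0)
    (hPsum : ∑ i, P i = 1)
    (hH : H = ∑ i, (lam i : ℂ) • P i)
    (nH : ℝ) (hlam : ∀ i, |lam i| ≤ nH)
    (h : ℝ → ℂ) (hcont : Continuous h) (hint : Integrable h)
    (hhat : ℝ → ℂ)
    (hhat_def : ∀ y : ℝ, hhat y = ∫ x : ℝ, h x * Complex.exp (Complex.I * x * y))
    (S : ℝ)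
    (hsupp : ∀ y : ℝ, S < |y| → hhat y = 0)
    (τ : ℝ) (hτ0 : 0 < τ) (hτ : τ < 2 * π / (2 * nH + S))
    (hsum : Summable fun m : ℤ => ‖h ((m : ℝ) * τ)‖) :
    ∀ (A : Matrix (Fin N) (Fin N) ℂ) (i j : Fin N),
      (∫ t : ℝ, h t *
        (NormedSpace.exp ((Complex.I * t) • H) * A *
          NormedSpace.exp (-(Complex.I * t) • H)) i j) =
      ∑' m : ℤ, (τ : ℂ) * h ((m : ℝ) * τ) *
        (NormedSpace.exp ((Complex.I * ((m : ℝ) * τ)) • H) * A *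
          NormedSpace.exp (-(Complex.I * ((m : ℝ) * τ)) • H)) i j := by
  intro A i j
  have hP : CompleteOrthogonalIdempotents P :=
    ⟨OrthogonalIdempotents.iff_mul_eq.mpr hPorth, hPsum⟩
  have hconj (t : ℝ) :
      (NormedSpace.exp ((I * t) • H) * A * NormedSpace.exp (-(I * t) • H)) i j =
        ∑ a, ∑ b, cexp (I * t * (lam a - lam b : ℝ)) * (P a * A * P b) i j := by
    rw [hH]
    exact hP.matrix_exp_smul_mul_mul_exp_neg_smul_apply lam t A i j
  have hτS : τ * (2 * nH + S) < 2 * π :=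
    (lt_div_iff₀ ((div_pos_iff_of_pos_left Real.two_pi_pos).mp (hτ0.trans hτ))).mp hτ
  have hbohr : ∀ a b, HasSum
      (fun m : ℤ => τ * h (m * τ) * cexp (I * (m * τ : ℝ) * (lam a - lam b : ℝ)))
      (∫ t, h t * cexp (I * t * (lam a - lam b : ℝ))) := by
    intro a b
    refine hasSum_sample_mul_cexp hcont hint (fun v hv => hhat_def v ▸ hsupp v hv) hτ0 ?_ hsum
    have := (abs_sub (lam a) (lam b)).trans (add_le_add (hlam a) (hlam b))
    nlinarith
  simp only [← ofReal_mul, hconj, Finset.mul_sum, ← mul_assoc]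
  refine Eq.trans ?_ (hasSum_sum fun a _ => hasSum_sum fun b _ =>
    (hbohr a b).mul_right ((P a * A * P b) i j)).tsum_eq.symm
  rw [integral_finsetSum _ fun a _ => integrable_finsetSum _ fun b _ =>
    (hint.mul_cexp_I_mul_ofReal_mul _).mul_const _]
  refine Finset.sum_congr rfl fun a _ => ?_
  rw [integral_finsetSum _ fun b _ => (hint.mul_cexp_I_mul_ofReal_mul _).mul_const _]
  simp only [integral_mul_const]

/-- Discretization identity via Poisson summation: if `ĥ` is supported in
`[−S,S]`, all Bohr frequencies of `H` lie in `[−2‖H‖, 2‖H‖]`, and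
`0 < τ < 2π/(2‖H‖+S)`, then (entrywise)
`∫ h(t) e^{iHt} A e^{−iHt} dt = Σ_{m∈ℤ} τ h(mτ) e^{iHmτ} A e^{−iHmτ}`. -/
theorem stmt_16 {N : ℕ} (ι : Type) [Fintype ι] [DecidableEq ι]
    (H : Matrix (Fin N) (Fin N) ℂ) (lam : ι → ℝ)
    (P : ι → Matrix (Fin N) (Fin N) ℂ)
    (hHerm : Hᴴ = H)
    (hPherm : ∀ i, (P i)ᴴ = P i)
    (hPorth : ∀ i j, P i * P j = if i = j then P i else 0)
    (hPsum : ∑ i, P i = 1)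
    (hH : H = ∑ i, (lam i : ℂ) • P i)
    (nH : ℝ) (hlam : ∀ i, |lam i| ≤ nH)
    (h : ℝ → ℂ) (hcont : Continuous h) (hint : Integrable h)
    (hhat : ℝ → ℂ)
    (hhat_def : ∀ y : ℝ, hhat y = ∫ x : ℝ, h x * Complex.exp (Complex.I * x * y))
    (S : ℝ) (hS : 0 < S)
    (hsupp : ∀ y : ℝ, S < |y| → hhat y = 0)
    (τ : ℝ) (hτ0 : 0 < τ) (hτ : τ < 2 * π / (2 * nH + S))
    (hsum : Summable fun m : ℤ => ‖h ((m : ℝ) * τ)‖) :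
    ∀ (A : Matrix (Fin N) (Fin N) ℂ) (i j : Fin N),
      (∫ t : ℝ, h t *
        (NormedSpace.exp ((Complex.I * t) • H) * A *
          NormedSpace.exp (-(Complex.I * t) • H)) i j) =
      ∑' m : ℤ, (τ : ℂ) * h ((m : ℝ) * τ) *
        (NormedSpace.exp ((Complex.I * ((m : ℝ) * τ)) • H) * A *
          NormedSpace.exp (-(Complex.I * ((m : ℝ) * τ)) • H)) i j :=
  stmt_16_general ι H lam P hPorth hPsum hH nH hlam h hcont hint hhat hhat_def S hsupp τ hτ0 hτ hsum
end

section
/- Let σ be a positive definite density matrix, Δ_σ(X) = σXσ⁻¹ the modular operator, and Γ_σ(X) = σ^{1/2} X σ^{1/2}. Suppose K is a matrix with tr(K) real such that the map Φ(X) = K†X + XK satisfies Γ_σ ∘ Φ = Φ† ∘ Γ_σ (KMS self-adjointness), where Φ† is the Hilbert–Schmidt adjoint. Then Δ_σ^{−1/2}(K) = K†, i.e., σ^{−1/2} K σ^{1/2} = K†. -/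
/-!
Substituting `X = R⁻¹ Y R⁻¹` in the KMS condition gives
`(R Kᴴ R⁻¹) Y + Y (R⁻¹ K R) = K Y + Y Kᴴ` for all `Y`, i.e. `A Y = Y B` with
`A = R Kᴴ R⁻¹ - K` and `B = Kᴴ - R⁻¹ K R`. Testing with `Y = 1` and with matrix units shows
`A = B = η • 1`; since `tr K` is real, `tr B = tr Kᴴ - tr K = 0`, so `η = 0`.
-/

open Matrix
open scoped ComplexOrder

namespace Matrix

variable {n α : Type*} [Fintype n] [DecidableEq n]

theorem exists_eq_scalar_of_forall_mul_eq_mul [CommRing α] {A B : Matrix n n α}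
    (h : ∀ Y, A * Y = Y * B) : ∃ c, A = scalar n c ∧ B = scalar n c := by
  have hAB : A = B := by simpa using h 1
  subst hAB
  obtain ⟨c, hc⟩ := mem_range_scalar_of_commute_single fun i j _ => (h (single i j 1)).symm
  exact ⟨c, hc.symm, hc.symm⟩

theorem eq_zero_of_forall_mul_eq_mul_of_trace_eq_zero [Field α] [CharZero α]
    {A B : Matrix n n α} (h : ∀ Y, A * Y = Y * B) (hB : B.trace = 0) : B = 0 := by
  obtain ⟨c, -, rfl⟩ := exists_eq_scalar_of_forall_mul_eq_mul h
  cases isEmpty_or_nonempty n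
  · exact Subsingleton.elim _ _
  · have : (Fintype.card n : α) * c = 0 := by simpa [scalar_apply] using hB
    simp [(mul_eq_zero.mp this).resolve_left (by simp)]

theorem conj_mul_add_mul_conj [CommRing α] {R : Matrix n n α} (hR : IsUnit R.det)
    (L M Y : Matrix n n α) :
    R * (L * (R⁻¹ * Y * R⁻¹) + R⁻¹ * Y * R⁻¹ * M) * R = R * L * R⁻¹ * Y + Y * (R⁻¹ * M * R) := by
  simp only [mul_add, add_mul, Matrix.mul_assoc, mul_nonsing_inv_cancel_left _ _ hR,
    nonsing_inv_mul _ hR, mul_one]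

end Matrix

theorem stmt_17_general {N : ℕ} (R : Matrix (Fin N) (Fin N) ℂ)
    (hR : R.PosDef)
    (K : Matrix (Fin N) (Fin N) ℂ)
    (htr : (K.trace).im = 0)
    (hKMS : ∀ X : Matrix (Fin N) (Fin N) ℂ,
      R * (Kᴴ * X + X * K) * R =
        K * (R * X * R) + (R * X * R) * Kᴴ) :
    R⁻¹ * K * R = Kᴴ := by
  have hRdet : IsUnit R.det := (isUnit_iff_isUnit_det R).mp hR.isUnit
  have hsandwich : ∀ Y, R * (R⁻¹ * Y * R⁻¹) * R = Y := fun Y => by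
    simp only [Matrix.mul_assoc, mul_nonsing_inv_cancel_left _ _ hRdet,
      nonsing_inv_mul _ hRdet, mul_one]
  have hcomm : ∀ Y, (R * Kᴴ * R⁻¹ - K) * Y = Y * (Kᴴ - R⁻¹ * K * R) := fun Y => by
    have h := hKMS (R⁻¹ * Y * R⁻¹)
    rw [conj_mul_add_mul_conj hRdet, hsandwich] at h
    rw [sub_mul, mul_sub, sub_eq_sub_iff_add_eq_add, h, add_comm]
  have htrace : (Kᴴ - R⁻¹ * K * R).trace = 0 := by
    rw [trace_sub, trace_mul_cycle, mul_nonsing_inv _ hRdet, one_mul, trace_conjTranspose,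
      Complex.star_def, Complex.conj_eq_iff_im.mpr htr, sub_self]
  exact (sub_eq_zero.mp (eq_zero_of_forall_mul_eq_mul_of_trace_eq_zero hcomm htrace)).symm

/-- If `Φ(X) = KᴴX + XK` is KMS self-adjoint, `Γ_σ ∘ Φ = Φ† ∘ Γ_σ`, and
`tr(K)` is real, then `σ^{−1/2} K σ^{1/2} = Kᴴ`. -/
theorem stmt_17 {N : ℕ} (σ R : Matrix (Fin N) (Fin N) ℂ)
    (hσ : σ.PosDef) (hσtr : σ.trace = 1)
    (hR : R.PosDef) (hR2 : R * R = σ)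
    (K : Matrix (Fin N) (Fin N) ℂ)
    (htr : (K.trace).im = 0)
    (hKMS : ∀ X : Matrix (Fin N) (Fin N) ℂ,
      R * (Kᴴ * X + X * K) * R =
        K * (R * X * R) + (R * X * R) * Kᴴ) :
    R⁻¹ * K * R = Kᴴ :=
  stmt_17_general R hR K htr hKMS
end
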